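/- Let Z ~ N(0,1) and for ν² > 0 let R = Z·ν₀/ν where ν₀² is the true variance. Define ψ(w, ν²) = ω_c(w/ν)² (w/ν)² − a(c), where ω_c is the Huber weight function and a(c) = E[ω_c(Z)² Z²]. Then the map ν² ↦ E[ψ(W, ν²)], with W = ν₀ Z, is strictly decreasing in ν² on (0,∞), and consequently E[ψ(W, ν²)] = 0 if and only if ν² = ν₀². -/

import Mathlib

/-! After the substitution `t = ν₀² / ν²`, the expectation becomes `G t - G 1` with
`G t = E[min (t Z², c²)]`. The integrand is nondecreasing in `t`, and for `t₁ < t₂` it increases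
strictly on the open set where `0 < t₂ z² < c²`, which a Gaussian charges; so `G` is strictly
increasing, `ν² ↦ G (ν₀² / ν²)` strictly decreasing, and its unique zero is at `ν² = ν₀²`. -/

open MeasureTheory ProbabilityTheory Set

lemma isOpenPosMeasure_gaussianReal (m : ℝ) {v : NNReal} (hv : v ≠ 0) :
    (gaussianReal m v).IsOpenPosMeasure :=
  (gaussianReal_absolutelyContinuous' m hv).isOpenPosMeasure

lemma sq_sqrt_mul_div_sqrt {a b : ℝ} (ha : 0 ≤ a) (hb : 0 ≤ b) (z : ℝ) :
    (Real.sqrt a * z / Real.sqrt b) ^ 2 = a / b * z ^ 2 := by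
  rw [div_pow, mul_pow, Real.sq_sqrt ha, Real.sq_sqrt hb]
  ring

section TruncatedSquare

variable {μ : Measure ℝ} (c : ℝ)

lemma integrable_min_mul_sq [IsFiniteMeasure μ] {t : ℝ} (ht : 0 ≤ t) :
    Integrable (fun z => min (t * z ^ 2) (c ^ 2)) μ :=
  (integrable_const (c ^ 2)).mono' (by fun_prop) <| ae_of_all _ fun z => by
    rw [Real.norm_eq_abs, abs_of_nonneg (le_min (by positivity) (by positivity))]
    exact min_le_right _ _

lemma strictMonoOn_integral_min_mul_sq [IsFiniteMeasure μ] [μ.IsOpenPosMeasure] (hc : c ≠ 0) :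
    StrictMonoOn (fun t => ∫ z, min (t * z ^ 2) (c ^ 2) ∂μ) (Ici 0) := by
  intro t₁ ht₁ t₂ ht₂ h12
  rw [mem_Ici] at ht₁ ht₂
  have ht₂_pos : 0 < t₂ := ht₁.trans_lt h12
  set z₀ := Real.sqrt (c ^ 2 / (2 * t₂))
  have hz₀ : z₀ ^ 2 = c ^ 2 / (2 * t₂) := Real.sq_sqrt (by positivity)
  have h₂ : t₂ * z₀ ^ 2 = c ^ 2 / 2 := by
    rw [hz₀]
    field_simp
  have h₁ : t₁ * z₀ ^ 2 < c ^ 2 / 2 :=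
    h₂ ▸ mul_lt_mul_of_pos_right h12 (hz₀ ▸ by positivity)
  have hc2 : 0 < c ^ 2 := by positivity
  have gap : 0 < ∫ z, (min (t₂ * z ^ 2) (c ^ 2) - min (t₁ * z ^ 2) (c ^ 2)) ∂μ := by
    refine integral_pos_of_integrable_nonneg_nonzero (x := z₀) (by fun_prop)
      ((integrable_min_mul_sq c ht₂).sub (integrable_min_mul_sq c ht₁))
      (fun z => sub_nonneg.2 (min_le_min_right _ (by gcongr))) ?_
    rw [min_eq_left (by linarith), min_eq_left (by linarith)]
    linarith
  rw [integral_sub (integrable_min_mul_sq c ht₂) (integrable_min_mul_sq c ht₁)] at gap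
  exact sub_pos.1 gap

end TruncatedSquare

/-- with `W = ν₀ Z`, `Z` standard Gaussian, and the Huber proposal-2
score `ψ(w, ν²) = min((w/ν)², c²) − a(c)` with `a(c) = E[min(Z², c²)]`, the map
`ν² ↦ E[ψ(W, ν²)]` is strictly decreasing on `(0,∞)` and vanishes iff `ν² = ν₀²`. -/
theorem huber_wv_identifiability
    (c ν₀sq : ℝ) (hc : 0 < c) (hν₀ : 0 < ν₀sq)
    (a : ℝ)
    (ha : a = ∫ z, min (z ^ 2) (c ^ 2) ∂(gaussianReal 0 1))
    (F : ℝ → ℝ)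
    (hF : ∀ νsq : ℝ, F νsq =
      (∫ z, min ((Real.sqrt ν₀sq * z / Real.sqrt νsq) ^ 2) (c ^ 2)
        ∂(gaussianReal 0 1)) - a) :
    StrictAntiOn F (Ioi (0 : ℝ)) ∧
      ∀ νsq ∈ Ioi (0 : ℝ), (F νsq = 0 ↔ νsq = ν₀sq) := by
  have := isOpenPosMeasure_gaussianReal 0 one_ne_zero
  set G := fun t => ∫ z, min (t * z ^ 2) (c ^ 2) ∂(gaussianReal 0 1)
  have hG : StrictMonoOn G (Ici 0) := strictMonoOn_integral_min_mul_sq c hc.ne'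
  have hFG : ∀ νsq ∈ Ioi (0 : ℝ), F νsq = G (ν₀sq / νsq) - G 1 := fun νsq hν => by
    simp only [hF, ha, G, one_mul, sq_sqrt_mul_div_sqrt hν₀.le (le_of_lt hν)]
  have hanti : StrictAntiOn F (Ioi 0) := by
    intro x hx y hy hxy
    have := hG (div_pos hν₀ hy).le (div_pos hν₀ hx).le (div_lt_div_of_pos_left hν₀ hx hxy)
    rw [hFG x hx, hFG y hy]
    linarith
  have hzero : F ν₀sq = 0 := by rw [hFG ν₀sq hν₀, div_self hν₀.ne', sub_self]
  exact ⟨hanti, fun νsq hν => hzero ▸ hanti.injOn.eq_iff hν hν₀⟩
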